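/- Let a ∈ ℂ. In the quotient V = (L × L)/range(T) for the quartic curve u² = x⁴ − 2ax² + 1, for every natural number k the class of (X^(2k+1), 0) equals (Q k).eval a times the class of (X, 0); that is, [x^(2k+1)] = P_k(a)·ω₃, where P_k is the k-th Legendre polynomial: the odd-positive sector is governed by the Legendre family. -/

import Mathlib

/-!
Applying `∂ = u·d/dx` to `xⁿ·u` gives the even element
`P·n xⁿ⁻¹ + (P'/2)·xⁿ = (n+2) xⁿ⁺³ - (2n+2) a xⁿ⁺¹ + n xⁿ⁻¹`, so in `A/∂A` the odd monomials obey
`(k+2)[x²ᵏ⁺⁵] = (2k+3) a [x²ᵏ⁺³] - (k+1)[x²ᵏ⁺¹]` and `[x³] = a[x]`. This is Legendre's recurrence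
evaluated at `a`, and a three-term recurrence with nonvanishing leading coefficient determines a
sequence from its first two terms.
-/

open LaurentPolynomial

/-- The linear map `T(f,g) = (p * D g + w * g, D f)` on `L × L`, encoding the distinguished
derivation of the superelliptic algebra (even part `L`, odd part `L * u`), where `p = P`
and `w` is the odd-weight term `u * u' = P'/2`. -/
noncomputable def Tgen (p w : LaurentPolynomial ℂ)
    (D : LaurentPolynomial ℂ →ₗ[ℂ] LaurentPolynomial ℂ) :
    (LaurentPolynomial ℂ × LaurentPolynomial ℂ) →ₗ[ℂ]
      (LaurentPolynomial ℂ × LaurentPolynomial ℂ) where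
  toFun fg := (p * D fg.2 + w * fg.2, D fg.1)
  map_add' x y := by
    ext
    · simp only [Prod.fst_add, Prod.snd_add, map_add]
      ring_nf
    · simp [Prod.snd_add]
  map_smul' c x := by
    ext
    · simp only [Prod.smul_fst, Prod.smul_snd, map_smul, smul_add, mul_smul_comm,
        RingHom.id_apply]
    · simp

/-- The derivation map for the quartic curve: `P = X^4 - 2aX^2 + 1`, `P'/2 = 2X^3 - 2aX`. -/
noncomputable def Tquart (a : ℂ)
    (D : LaurentPolynomial ℂ →ₗ[ℂ] LaurentPolynomial ℂ) :
    (LaurentPolynomial ℂ × LaurentPolynomial ℂ) →ₗ[ℂ]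
      (LaurentPolynomial ℂ × LaurentPolynomial ℂ) :=
  Tgen (T 4 - 2 * C a * T 2 + 1) (2 * T 3 - 2 * C a * T 1) D

theorem eq_of_two_step_recurrence {K M : Type*} [Field K] [AddCommGroup M] [Module K M]
    (γ α β : ℕ → K) (hγ : ∀ n, γ n ≠ 0) {s t : ℕ → M}
    (hs : ∀ n, γ n • s (n + 2) = α n • s (n + 1) - β n • s n)
    (ht : ∀ n, γ n • t (n + 2) = α n • t (n + 1) - β n • t n)
    (h0 : s 0 = t 0) (h1 : s 1 = t 1) : s = t := by
  funext n
  induction n using Nat.twoStepInduction with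
  | zero => exact h0
  | one => exact h1
  | more n ih₀ ih₁ =>
    refine smul_right_injective M (hγ n) ?_
    change γ n • s (n + 2) = γ n • t (n + 2)
    rw [hs, ht, ih₀, ih₁]

theorem legendre_eval_recurrence (Q : ℕ → Polynomial ℂ)
    (hQrec : ∀ n : ℕ, ((n : ℂ) + 2) • Q (n + 2) =
      (2 * (n : ℂ) + 3) • (Polynomial.X * Q (n + 1)) - ((n : ℂ) + 1) • Q n)
    (a : ℂ) (n : ℕ) :
    ((n : ℂ) + 2) * (Q (n + 2)).eval a =
      (2 * (n : ℂ) + 3) * a * (Q (n + 1)).eval a - ((n : ℂ) + 1) * (Q n).eval a := by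
  simpa [mul_assoc] using congrArg (Polynomial.eval a) (hQrec n)

theorem quartic_mul_smul_T_add_mul_T (a : ℂ) (n : ℤ) :
    (T 4 - 2 * C a * T 2 + 1 : LaurentPolynomial ℂ) * ((n : ℂ) • T (n - 1))
        + (2 * T 3 - 2 * C a * T 1) * T n
      = ((n : ℂ) + 2) • T (n + 3) - ((2 * (n : ℂ) + 2) * a) • T (n + 1) + (n : ℂ) • T (n - 1) := by
  obtain ⟨m, rfl⟩ : ∃ m, n = m + 1 := ⟨n - 1, by ring⟩
  have hT : ∀ k : ℕ, (T k : LaurentPolynomial ℂ) = T 1 ^ k := fun k => by rw [T_pow, mul_one]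
  have h2 := hT 2
  have h3 := hT 3
  have h4 := hT 4
  simp only [Nat.cast_ofNat] at h2 h3 h4
  simp only [add_sub_cancel_right, add_assoc, T_add, h2, h3, h4, smul_eq_C_mul, map_add, map_mul,
    map_ofNat]
  ring

section Quartic

variable (a : ℂ) {D : LaurentPolynomial ℂ →ₗ[ℂ] LaurentPolynomial ℂ}
  (hD : ∀ n : ℤ, D (T n) = (n : ℂ) • T (n - 1))
include hD

theorem Tquart_zero_T (n : ℤ) :
    Tquart a D (0, T n) = ((n : ℂ) + 2) • (T (n + 3), 0) - ((2 * (n : ℂ) + 2) * a) • (T (n + 1), 0)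
      + (n : ℂ) • (T (n - 1), 0) := by
  change ((_ : LaurentPolynomial ℂ) * D (T n) + _ * T n, D 0) = _
  rw [hD, map_zero, quartic_mul_smul_T_add_mul_T]
  simp

theorem mkQ_range_Tquart_T_add_three (n : ℤ) :
    ((n : ℂ) + 2) • (LinearMap.range (Tquart a D)).mkQ (T (n + 3), 0) =
      ((2 * (n : ℂ) + 2) * a) • (LinearMap.range (Tquart a D)).mkQ (T (n + 1), 0)
        - (n : ℂ) • (LinearMap.range (Tquart a D)).mkQ (T (n - 1), 0) := by
  have h := LinearMap.congr_fun (LinearMap.range_mkQ_comp (Tquart a D)) (0, T n)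
  rw [LinearMap.comp_apply, Tquart_zero_T a hD] at h
  simp only [map_add, map_sub, map_smul, LinearMap.zero_apply] at h
  linear_combination (norm := module) h

theorem mkQ_range_Tquart_T_three :
    (LinearMap.range (Tquart a D)).mkQ (T 3, 0) = a • (LinearMap.range (Tquart a D)).mkQ (T 1, 0) := by
  have h := mkQ_range_Tquart_T_add_three a hD 0
  simp only [Int.cast_zero, zero_add, mul_zero, zero_smul, sub_zero] at h
  linear_combination (norm := module) (2⁻¹ : ℂ) • h

theorem mkQ_range_Tquart_T_odd (k : ℕ) :
    ((k : ℂ) + 2) • (LinearMap.range (Tquart a D)).mkQ (T (2 * ((k + 2 : ℕ) : ℤ) + 1), 0) =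
      ((2 * (k : ℂ) + 3) * a) • (LinearMap.range (Tquart a D)).mkQ (T (2 * ((k + 1 : ℕ) : ℤ) + 1), 0)
        - ((k : ℂ) + 1) • (LinearMap.range (Tquart a D)).mkQ (T (2 * (k : ℤ) + 1), 0) := by
  have h := mkQ_range_Tquart_T_add_three a hD (2 * k + 2)
  rw [show (2 * k + 2 : ℤ) + 3 = 2 * ((k + 2 : ℕ) : ℤ) + 1 by push_cast; ring,
    show (2 * k + 2 : ℤ) + 1 = 2 * ((k + 1 : ℕ) : ℤ) + 1 by push_cast; ring,
    show (2 * k + 2 : ℤ) - 1 = 2 * (k : ℤ) + 1 by ring] at h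
  push_cast at h ⊢
  linear_combination (norm := module) (2⁻¹ : ℂ) • h

end Quartic

/-- in the quartic quotient, the odd-positive sector is governed by the
Legendre family: `[x^(2k+1)] = P_k(a) * ω₃`. -/
theorem quartic_odd_sector_legendre (a : ℂ)
    (D : LaurentPolynomial ℂ →ₗ[ℂ] LaurentPolynomial ℂ)
    (hD : ∀ n : ℤ, D (T n) = (n : ℂ) • T (n - 1))
    (Q : ℕ → Polynomial ℂ) (hQ0 : Q 0 = 1) (hQ1 : Q 1 = Polynomial.X)
    (hQrec : ∀ n : ℕ, ((n : ℂ) + 2) • Q (n + 2) =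
      (2 * (n : ℂ) + 3) • (Polynomial.X * Q (n + 1)) - ((n : ℂ) + 1) • Q n)
    (k : ℕ) :
    (LinearMap.range (Tquart a D)).mkQ (T (2 * (k : ℤ) + 1), 0) =
      (Q k).eval a • (LinearMap.range (Tquart a D)).mkQ (T 1, 0) := by
  set π := (LinearMap.range (Tquart a D)).mkQ
  have hγ : ∀ n : ℕ, (n : ℂ) + 2 ≠ 0 := fun n => by exact_mod_cast Nat.succ_ne_zero (n + 1)
  refine congrFun (eq_of_two_step_recurrence (fun n => (n : ℂ) + 2) (fun n => (2 * (n : ℂ) + 3) * a)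
    (fun n => (n : ℂ) + 1) hγ (s := fun k => π (T (2 * (k : ℤ) + 1), 0))
    (t := fun k => (Q k).eval a • π (T 1, 0)) (mkQ_range_Tquart_T_odd a hD) ?_ ?_ ?_) k
  · intro n
    simp only [smul_smul, ← sub_smul, legendre_eval_recurrence Q hQrec]
  · simp [hQ0]
  · rw [hQ1, Polynomial.eval_X]
    exact mkQ_range_Tquart_T_three a hD
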